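/- arXiv:1507.00048 — 4 statements merged into one kernel-verified Lean document; each statement's English description precedes it below -/
import Mathlib

section
/- Let P and Q be finite-rank orthogonal projections of the same rank n on a Hilbert space H with ‖P - Q‖ = 1. Then there exists a unit vector e ∈ H such that either (Pe = e and Qe = 0) or (Qe = e and Pe = 0). -/
/-!
`P - Q` is self-adjoint with finite-dimensional range, so its norm `1` is attained at a unit
vector `x`. Then `re ⟪(P - Q)² x, x⟫ = ‖(P - Q) x‖² = 1` while `‖(P - Q)² x‖ ≤ 1`, which forces
`(P - Q)² x = x`; hence `(P - Q) x + x` (or `x` itself, if that vanishes) is an eigenvector of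
`P - Q` for the eigenvalue `1` (resp. `-1`). Finally, if `P e - Q e = e` then
`‖e‖² = ‖P e‖² - ‖Q e‖² ≤ ‖e‖² - ‖Q e‖²`, so `Q e = 0` and `P e = e`.
-/

/-- `P` is an orthogonal projection of rank `n` on a Hilbert space. -/
def IsOrthProjOfRank {𝕜 H : Type*} [RCLike 𝕜] [NormedAddCommGroup H]
    [InnerProductSpace 𝕜 H] [CompleteSpace H] (n : ℕ) (P : H →L[𝕜] H) : Prop :=
  IsSelfAdjoint P ∧ P ∘L P = P ∧ Module.finrank 𝕜 (LinearMap.range (P : H →ₗ[𝕜] H)) = n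

open RCLike Metric

namespace ContinuousLinearMap

variable {𝕜 E F : Type*} [RCLike 𝕜]

theorem exists_norm_apply_eq_opNorm_of_finiteDimensional [NormedAddCommGroup E]
    [NormedSpace 𝕜 E] [FiniteDimensional 𝕜 E] [Nontrivial E] [SeminormedAddCommGroup F]
    [NormedSpace 𝕜 F] (S : E →L[𝕜] F) : ∃ x, ‖x‖ = 1 ∧ ‖S x‖ = ‖S‖ := by
  have := FiniteDimensional.proper_rclike 𝕜 E
  have hK : IsCompact ((fun x => ‖S x‖) '' sphere 0 1) :=
    (isCompact_sphere 0 1).image (by fun_prop)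
  have hne := Set.nonempty_coe_sort.1 (NormedSpace.sphere_nonempty_rclike 𝕜 (E := E) zero_le_one)
  obtain ⟨x, hx, hSx⟩ := hK.sSup_mem (hne.image _)
  exact ⟨x, by simpa using hx, hSx.trans S.sSup_sphere_eq_norm⟩

variable [NormedAddCommGroup E] [InnerProductSpace 𝕜 E] [SeminormedAddCommGroup F]
  [NormedSpace 𝕜 F]

theorem exists_norm_apply_eq_opNorm_of_orthogonal_le_ker (T : E →L[𝕜] F)
    (V : Submodule 𝕜 E) [FiniteDimensional 𝕜 V] (hV : Vᗮ ≤ T.ker) (hT : T ≠ 0) :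
    ∃ x, ‖x‖ = 1 ∧ ‖T x‖ = ‖T‖ := by
  set S := T ∘L V.subtypeL
  have hTS : T = S ∘L V.orthogonalProjectionOnto := by
    ext x
    have : T (x - V.starProjection x) = 0 := hV (V.sub_starProjection_mem_orthogonal x)
    rw [map_sub, sub_eq_zero] at this
    exact this
  have hS : ‖S‖ = ‖T‖ := by
    refine le_antisymm ?_ ?_
    · calc ‖S‖ ≤ ‖T‖ * ‖V.subtypeL‖ := opNorm_comp_le _ _
        _ ≤ ‖T‖ := mul_le_of_le_one_right (norm_nonneg _) V.norm_subtypeL_le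
    · calc ‖T‖ = ‖S ∘L V.orthogonalProjectionOnto‖ := congrArg _ hTS
        _ ≤ ‖S‖ * ‖V.orthogonalProjectionOnto‖ := opNorm_comp_le _ _
        _ ≤ ‖S‖ := mul_le_of_le_one_right (norm_nonneg _) V.orthogonalProjectionOnto_norm_le
  have : Nontrivial V := by
    by_contra hV0
    rw [not_nontrivial_iff_subsingleton] at hV0
    exact hT (hTS.trans (by rw [Subsingleton.elim S 0, zero_comp]))
  obtain ⟨v, hv, hSv⟩ := S.exists_norm_apply_eq_opNorm_of_finiteDimensional
  exact ⟨v, by simpa using hv, hSv.trans hS⟩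

end ContinuousLinearMap

namespace IsSelfAdjoint

variable {𝕜 E : Type*} [RCLike 𝕜] [NormedAddCommGroup E] [InnerProductSpace 𝕜 E]
  [CompleteSpace E] {T : E →L[𝕜] E}

theorem exists_norm_apply_eq_opNorm (hT : IsSelfAdjoint T)
    [FiniteDimensional 𝕜 T.range] (hT0 : T ≠ 0) : ∃ x, ‖x‖ = 1 ∧ ‖T x‖ = ‖T‖ :=
  T.exists_norm_apply_eq_opNorm_of_orthogonal_le_ker T.range
    (by rw [T.orthogonal_range, hT.adjoint_eq]) hT0

theorem apply_apply_eq_self_of_norm_apply_eq (hT : IsSelfAdjoint T) (hT1 : ‖T‖ ≤ 1) {x : E}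
    (hx : ‖T x‖ = ‖x‖) : T (T x) = x := by
  have hre : re (inner 𝕜 (T (T x)) x) = ‖x‖ ^ 2 := by
    rw [← T.adjoint_inner_right, hT.adjoint_eq, inner_self_eq_norm_sq, hx]
  have hle : ‖T (T x)‖ ≤ ‖x‖ := by simpa [hx] using T.le_of_opNorm_le hT1 (T x)
  have : ‖T (T x) - x‖ ^ 2 ≤ 0 := by
    rw [@norm_sub_sq 𝕜, hre]
    nlinarith [norm_nonneg (T (T x))]
  exact sub_eq_zero.mp (norm_eq_zero.mp (pow_eq_zero_iff two_ne_zero |>.mp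
    (le_antisymm this (sq_nonneg _))))

end IsSelfAdjoint

namespace LinearMap

variable {𝕜 E : Type*} [RCLike 𝕜] [NormedAddCommGroup E] [NormedSpace 𝕜 E]

theorem exists_norm_eq_one_and_apply_eq_or_eq_neg_of_apply_apply_eq (T : E →ₗ[𝕜] E) {x : E}
    (hx : x ≠ 0) (hTx : T (T x) = x) : ∃ e : E, ‖e‖ = 1 ∧ (T e = e ∨ T e = -e) := by
  obtain ⟨y, hy, hTy⟩ : ∃ y ≠ 0, T y = y ∨ T y = -y := by
    by_cases h : T x + x = 0
    · exact ⟨x, hx, Or.inr (eq_neg_of_add_eq_zero_left h)⟩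
    · exact ⟨T x + x, h, Or.inl (by rw [map_add, hTx, add_comm])⟩
  refine ⟨(‖y‖⁻¹ : 𝕜) • y, norm_smul_inv_norm hy, ?_⟩
  rcases hTy with h | h <;> simp only [map_smul, h, smul_neg, true_or, or_true]

end LinearMap

namespace IsStarProjection

variable {𝕜 E : Type*} [RCLike 𝕜] [NormedAddCommGroup E] [InnerProductSpace 𝕜 E]
  [CompleteSpace E] {p q : E →L[𝕜] E}

theorem re_inner_apply_self (hp : IsStarProjection p) (x : E) :
    re (inner 𝕜 (p x) x) = ‖p x‖ ^ 2 := by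
  obtain ⟨K, _, rfl⟩ := isStarProjection_iff_eq_starProjection.mp hp
  exact K.re_inner_starProjection_eq_normSq x

theorem norm_apply_le (hp : IsStarProjection p) (x : E) : ‖p x‖ ≤ ‖x‖ := by
  obtain ⟨K, _, rfl⟩ := isStarProjection_iff_eq_starProjection.mp hp
  exact K.norm_starProjection_apply_le x

theorem apply_eq_self_and_apply_eq_zero_of_sub_apply_eq_self (hp : IsStarProjection p)
    (hq : IsStarProjection q) {x : E} (h : p x - q x = x) : p x = x ∧ q x = 0 := by
  have hnorm : ‖x‖ ^ 2 = ‖p x‖ ^ 2 - ‖q x‖ ^ 2 := by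
    rw [← hp.re_inner_apply_self, ← hq.re_inner_apply_self, ← map_sub, ← inner_sub_left, h,
      inner_self_eq_norm_sq]
  have hle := hp.norm_apply_le x
  have hq0 : ‖q x‖ ^ 2 ≤ 0 := by nlinarith [norm_nonneg (p x)]
  have hqx : q x = 0 :=
    norm_eq_zero.mp (pow_eq_zero_iff two_ne_zero |>.mp (le_antisymm hq0 (sq_nonneg _)))
  exact ⟨by simpa [hqx] using h, hqx⟩

end IsStarProjection

theorem stmt3 {𝕜 H : Type*} [RCLike 𝕜] [NormedAddCommGroup H] [InnerProductSpace 𝕜 H]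
    [CompleteSpace H] (n : ℕ) (hn : 0 < n) (P Q : H →L[𝕜] H)
    (hP : IsOrthProjOfRank n P) (hQ : IsOrthProjOfRank n Q) (hPQ : ‖P - Q‖ = 1) :
    ∃ e : H, ‖e‖ = 1 ∧ ((P e = e ∧ Q e = 0) ∨ (Q e = e ∧ P e = 0)) := by
  obtain ⟨hPsa, hPid, hPrk⟩ := hP
  obtain ⟨hQsa, hQid, hQrk⟩ := hQ
  have hp : IsStarProjection P := ⟨hPid, hPsa⟩
  have hq : IsStarProjection Q := ⟨hQid, hQsa⟩
  have hT : IsSelfAdjoint (P - Q) := hPsa.sub hQsa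
  have : FiniteDimensional 𝕜 P.range := .of_finrank_pos (hPrk ▸ hn)
  have : FiniteDimensional 𝕜 Q.range := .of_finrank_pos (hQrk ▸ hn)
  have : FiniteDimensional 𝕜 (P - Q).range := Submodule.finiteDimensional_of_le
    (S₂ := P.range ⊔ Q.range) fun _ ⟨x, hx⟩ ↦
      hx ▸ Submodule.sub_mem_sup (LinearMap.mem_range_self _ x) (LinearMap.mem_range_self _ x)
  obtain ⟨x, hx, hTx⟩ := hT.exists_norm_apply_eq_opNorm (by rintro h; simp [h] at hPQ)
  have hTTx : (P - Q) ((P - Q) x) = x :=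
    hT.apply_apply_eq_self_of_norm_apply_eq hPQ.le (by rw [hTx, hPQ, hx])
  obtain ⟨e, he, hPe | hQe⟩ :=
    (↑(P - Q) : H →ₗ[𝕜] H).exists_norm_eq_one_and_apply_eq_or_eq_neg_of_apply_apply_eq
      (norm_ne_zero_iff.mp (hx ▸ one_ne_zero)) hTTx
  · exact ⟨e, he, .inl (hp.apply_eq_self_and_apply_eq_zero_of_sub_apply_eq_self hq hPe)⟩
  · refine ⟨e, he, .inr (hq.apply_eq_self_and_apply_eq_zero_of_sub_apply_eq_self hp ?_)⟩
    simpa using congrArg Neg.neg hQe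
end

section
/- Let H = H₁ ⊕ H₂ ⊕ H₃ be an orthogonal decomposition with dim H₁ = dim H₂ = r, and let P be the projection onto H₁ ⊕ im P₁ and Q the projection onto H₂ ⊕ im Q₁, where P₁, Q₁ are rank-(n−r) projections on H₃. For any unitary U : H₂ → H₁ and any rank-(n−r) projection R₁ on H₃, the operator R given in block form by [[½I, ½U, 0],[½U*, ½I, 0],[0, 0, R₁]] is an orthogonal projection of rank n, and if ‖R₁ − P₁‖ ≤ 1/√2 and ‖R₁ − Q₁‖ ≤ 1/√2 then ‖R − P‖ ≤ 1/√2 and ‖R − Q‖ ≤ 1/√2. -/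
/-- The operator norm (ℓ²→ℓ² norm) of a square matrix. -/
noncomputable def matOpNorm {ι : Type*} [Fintype ι] [DecidableEq ι] {𝕜 : Type*} [RCLike 𝕜]
    (M : Matrix ι ι 𝕜) : ℝ :=
  ‖Matrix.toEuclideanCLM (𝕜 := 𝕜) M‖

/-- `M` is an orthogonal-projection matrix of rank `n`. -/
def IsProjMatOfRank {ι : Type*} [Fintype ι] [DecidableEq ι] {𝕜 : Type*} [RCLike 𝕜]
    (n : ℕ) (M : Matrix ι ι 𝕜) : Prop :=
  M.IsHermitian ∧ M * M = M ∧ M.rank = n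

/-!
On `H₁ ⊕ H₂` put `J = [[0, U], [U*, 0]]` and `S = [[1, 0], [0, -1]]`: self-adjoint involutions
that anticommute. The upper-left blocks of `R`, `P`, `Q` are `(1 + J)/2`, `(1 + S)/2` and
`(1 - S)/2`; the first is a projection of trace `r` because `J² = 1` and `tr J = 0`, and since
idempotents have rank equal to trace, `R` is a projection of rank `r + (n - r)`.
The upper-left blocks of `R - P` and `R - Q` are `(J ∓ S)/2`, which are self-adjoint with square
`1/2` because `(J ∓ S)² = 2`; so they have norm at most `1/√2`, and a block-diagonal matrix has
norm at most the larger norm of its blocks.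
-/

open Matrix WithLp
open scoped Matrix.Norms.L2Operator

section Involutions

variable {𝕜 A : Type*} [Field 𝕜] [CharZero 𝕜] [Ring A] [Algebra 𝕜 A]

theorem isIdempotentElem_half_smul_one_add {J : A} (hJ : J * J = 1) :
    IsIdempotentElem ((1 / 2 : 𝕜) • (1 + J)) := by
  simp only [IsIdempotentElem, smul_mul_smul_comm, add_mul, mul_add, hJ, one_mul, mul_one]
  module

theorem half_smul_sub_mul_self {J S : A} (hJ : J * J = 1) (hS : S * S = 1)
    (hJS : J * S + S * J = 0) :
    (1 / 2 : 𝕜) • (J - S) * (1 / 2 : 𝕜) • (J - S) = (1 / 2 : 𝕜) • 1 := by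
  have : (J - S) * (J - S) = (1 + 1) - (J * S + S * J) := by
    rw [sub_mul, mul_sub, mul_sub, hJ, hS]
    abel
  rw [smul_mul_smul_comm, this, hJS, sub_zero]
  module

end Involutions

section CStarRing

variable {𝕜 E : Type*} [NormedRing E] [StarRing E] [CStarRing E]

theorem IsSelfAdjoint.norm_sq_le_of_mul_self_eq_smul_one [NormedField 𝕜] [NormedAlgebra 𝕜 E]
    {x : E} (hx : IsSelfAdjoint x) {c : 𝕜} (h : x * x = c • 1) : ‖x‖ ^ 2 ≤ ‖c‖ := by
  rcases subsingleton_or_nontrivial E with hE | hE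
  · simp [Subsingleton.elim x 0]
  · rw [← hx.norm_mul_self, h, norm_smul, CStarRing.norm_one, mul_one]

theorem norm_half_smul_one_add_sub_le [RCLike 𝕜] [NormedAlgebra 𝕜 E] [StarModule 𝕜 E]
    {J S : E} (hJ : J * J = 1) (hS : S * S = 1) (hJS : J * S + S * J = 0) (hJsa : IsSelfAdjoint J)
    (hSsa : IsSelfAdjoint S) :
    ‖(1 / 2 : 𝕜) • (1 + J) - (1 / 2 : 𝕜) • (1 + S)‖ ≤ (Real.sqrt 2)⁻¹ := by
  have hhalf : IsSelfAdjoint (1 / 2 : 𝕜) := by simp [isSelfAdjoint_iff]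
  have hsq := (hhalf.smul (hJsa.sub hSsa)).norm_sq_le_of_mul_self_eq_smul_one
    (half_smul_sub_mul_self hJ hS hJS)
  rw [← Real.sqrt_inv, show (1 / 2 : 𝕜) • (1 + J) - (1 / 2 : 𝕜) • (1 + S) =
    (1 / 2 : 𝕜) • (J - S) by module]
  apply Real.le_sqrt_of_sq_le
  simpa using hsq

end CStarRing

theorem EuclideanSpace.norm_sq_sum_type {𝕜 α β : Type*} [RCLike 𝕜] [Fintype α] [Fintype β]
    (x : EuclideanSpace 𝕜 (α ⊕ β)) :
    ‖x‖ ^ 2 =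
      ‖toLp 2 (ofLp x ∘ Sum.inl)‖ ^ 2 + ‖toLp 2 (ofLp x ∘ Sum.inr)‖ ^ 2 := by
  simp only [EuclideanSpace.norm_sq_eq, Fintype.sum_sum_type]
  rfl

namespace Matrix

theorem fromBlocks_sub {l m n o α : Type*} [Sub α]
    (A A' : Matrix n l α) (B B' : Matrix n m α) (C C' : Matrix o l α) (D D' : Matrix o m α) :
    fromBlocks A B C D - fromBlocks A' B' C' D' =
      fromBlocks (A - A') (B - B') (C - C') (D - D') := by
  ext (i | i) (j | j) <;> rfl

theorem trace_fromBlocks {m n α : Type*} [Fintype m] [Fintype n] [AddCommMonoid α]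
    (A : Matrix m m α) (B : Matrix m n α) (C : Matrix n m α) (D : Matrix n n α) :
    (fromBlocks A B C D).trace = A.trace + D.trace := by
  simp [trace, Fintype.sum_sum_type]

section IdempotentRank

variable {n K : Type*} [Fintype n] [DecidableEq n] [Field K] {M : Matrix n n K}

theorem trace_eq_rank_of_isIdempotentElem (hM : IsIdempotentElem M) : M.trace = M.rank := by
  have h : IsIdempotentElem M.toLin' := hM.map Matrix.toLinAlgEquiv'
  rw [← trace_toLin'_eq, ((LinearMap.isProj_range_iff_isIdempotentElem _).mpr h).trace, rank,
    toLin'_apply']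

theorem rank_eq_of_isIdempotentElem_of_trace_eq [CharZero K] (hM : IsIdempotentElem M) {a : ℕ}
    (h : M.trace = a) : M.rank = a := by
  exact_mod_cast (trace_eq_rank_of_isIdempotentElem hM).symm.trans h

end IdempotentRank

section Sign

variable (k R : Type*) [DecidableEq k] [Ring R]

def signInvolution : Matrix (k ⊕ k) (k ⊕ k) R :=
  fromBlocks 1 0 0 (-1)

theorem signInvolution_mul_self [Fintype k] : signInvolution k R * signInvolution k R = 1 := by
  simp [signInvolution, fromBlocks_multiply]

theorem isSelfAdjoint_signInvolution [StarRing R] : IsSelfAdjoint (signInvolution k R) := by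
  simp [IsSelfAdjoint, signInvolution, star_eq_conjTranspose, fromBlocks_conjTranspose]

end Sign

section OffDiag

variable {k R : Type*} [CommRing R] [StarRing R]

def offDiagInvolution (U : Matrix k k R) : Matrix (k ⊕ k) (k ⊕ k) R :=
  fromBlocks 0 U Uᴴ 0

theorem offDiagInvolution_mul_self [Fintype k] [DecidableEq k] {U : Matrix k k R}
    (hU : U ∈ unitaryGroup k R) : offDiagInvolution U * offDiagInvolution U = 1 := by
  rw [offDiagInvolution, fromBlocks_multiply, ← fromBlocks_one]
  simp [← star_eq_conjTranspose, mem_unitaryGroup_iff.mp hU, mem_unitaryGroup_iff'.mp hU]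

theorem isSelfAdjoint_offDiagInvolution (U : Matrix k k R) :
    IsSelfAdjoint (offDiagInvolution U) := by
  simp [IsSelfAdjoint, offDiagInvolution, star_eq_conjTranspose, fromBlocks_conjTranspose]

theorem offDiagInvolution_mul_signInvolution_add [Fintype k] [DecidableEq k] (U : Matrix k k R) :
    offDiagInvolution U * signInvolution k R + signInvolution k R * offDiagInvolution U = 0 := by
  simp [offDiagInvolution, signInvolution, fromBlocks_multiply, fromBlocks_add]

theorem trace_offDiagInvolution [Fintype k] (U : Matrix k k R) :
    (offDiagInvolution U).trace = 0 := by
  simp [offDiagInvolution, trace_fromBlocks]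

end OffDiag

section Halves

variable {k K : Type*} [DecidableEq k] [Field K]

theorem fromBlocks_half_eq_half_smul_one_add_offDiagInvolution [StarRing K]
    (U : Matrix k k K) :
    fromBlocks ((1 / 2 : K) • 1) ((1 / 2 : K) • U) ((1 / 2 : K) • Uᴴ) ((1 / 2 : K) • 1) =
      (1 / 2 : K) • (1 + offDiagInvolution U) := by
  rw [offDiagInvolution, ← fromBlocks_one, fromBlocks_add, fromBlocks_smul]
  simp

variable [NeZero (2 : K)]

theorem fromBlocks_one_zero_zero_zero_eq :
    fromBlocks (1 : Matrix k k K) 0 0 0 = (1 / 2 : K) • (1 + signInvolution k K) := by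
  rw [signInvolution, ← fromBlocks_one, fromBlocks_add, fromBlocks_smul]
  simp [← add_smul, ← two_mul, mul_inv_cancel₀ (two_ne_zero : (2 : K) ≠ 0)]

theorem fromBlocks_zero_zero_zero_one_eq :
    fromBlocks (0 : Matrix k k K) 0 0 1 = (1 / 2 : K) • (1 + -signInvolution k K) := by
  rw [signInvolution, ← fromBlocks_one, fromBlocks_neg, fromBlocks_add, fromBlocks_smul]
  simp [← add_smul, ← two_mul, mul_inv_cancel₀ (two_ne_zero : (2 : K) ≠ 0)]

theorem trace_half_smul_one_add_offDiagInvolution [Fintype k] [StarRing K] (U : Matrix k k K) :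
    ((1 / 2 : K) • (1 + offDiagInvolution U)).trace = Fintype.card k := by
  simp [trace_offDiagInvolution, ← two_mul, inv_mul_cancel_left₀ (two_ne_zero : (2 : K) ≠ 0)]

end Halves

section L2OpNorm

variable {𝕜 : Type*} [RCLike 𝕜]

theorem l2_opNorm_fromBlocks_zero_le {m₁ m₂ n₁ n₂ : Type*} [Fintype m₁] [Fintype m₂]
    [Fintype n₁] [Fintype n₂] [DecidableEq n₁] [DecidableEq n₂]
    (X : Matrix m₁ n₁ 𝕜) (Y : Matrix m₂ n₂ 𝕜) :
    ‖fromBlocks X 0 0 Y‖ ≤ max ‖X‖ ‖Y‖ := by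
  rw [l2_opNorm_def]
  set T := (toEuclideanLin ≪≫ₗ LinearMap.toContinuousLinearMap) (fromBlocks X 0 0 Y)
  refine T.opNorm_le_bound (le_max_of_le_left (norm_nonneg _)) fun x => ?_
  refine (sq_le_sq₀ (norm_nonneg _) (by positivity)).mp ?_
  set x₁ : EuclideanSpace 𝕜 n₁ := toLp 2 (ofLp x ∘ Sum.inl)
  set x₂ : EuclideanSpace 𝕜 n₂ := toLp 2 (ofLp x ∘ Sum.inr)
  have h₁ : toLp 2 (ofLp (T x) ∘ Sum.inl) =
      (EuclideanSpace.equiv m₁ 𝕜).symm (X *ᵥ ofLp x₁) := by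
    ext i; simp [T, x₁, fromBlocks_mulVec, toLpLin_apply]
  have h₂ : toLp 2 (ofLp (T x) ∘ Sum.inr) =
      (EuclideanSpace.equiv m₂ 𝕜).symm (Y *ᵥ ofLp x₂) := by
    ext i; simp [T, x₂, fromBlocks_mulVec, toLpLin_apply]
  rw [EuclideanSpace.norm_sq_sum_type, mul_pow, EuclideanSpace.norm_sq_sum_type x, h₁, h₂,
    mul_add, ← mul_pow, ← mul_pow]
  gcongr
  · exact (l2_opNorm_mulVec X x₁).trans (by gcongr; exact le_max_left _ _)
  · exact (l2_opNorm_mulVec Y x₂).trans (by gcongr; exact le_max_right _ _)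

theorem l2_opNorm_fromBlocks_sub_le {m n : Type*} [Fintype m] [Fintype n] [DecidableEq m]
    [DecidableEq n] {X X' : Matrix m m 𝕜} {Y Y' : Matrix n n 𝕜} {c : ℝ}
    (hX : ‖X - X'‖ ≤ c) (hY : ‖Y - Y'‖ ≤ c) :
    ‖fromBlocks X 0 0 Y - fromBlocks X' 0 0 Y'‖ ≤ c := by
  rw [fromBlocks_sub, sub_zero, sub_zero]
  exact (l2_opNorm_fromBlocks_zero_le _ _).trans (max_le hX hY)

end L2OpNorm

end Matrix

theorem matOpNorm_eq_l2_opNorm {ι 𝕜 : Type*} [Fintype ι] [DecidableEq ι] [RCLike 𝕜]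
    (M : Matrix ι ι 𝕜) : matOpNorm M = ‖M‖ :=
  rfl

theorem IsProjMatOfRank.fromBlocks {m n 𝕜 : Type*} [Fintype m] [DecidableEq m] [Fintype n]
    [DecidableEq n] [RCLike 𝕜] {a d : ℕ} {A : Matrix m m 𝕜} {D : Matrix n n 𝕜}
    (hA : IsProjMatOfRank a A) (hD : IsProjMatOfRank d D) :
    IsProjMatOfRank (a + d) (Matrix.fromBlocks A 0 0 D) := by
  obtain ⟨hAh, hAA, hAr⟩ := hA
  obtain ⟨hDh, hDD, hDr⟩ := hD
  have hidem : IsIdempotentElem (Matrix.fromBlocks A 0 0 D) := by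
    simp [IsIdempotentElem, fromBlocks_multiply, hAA, hDD]
  refine ⟨hAh.fromBlocks (by simp) hDh, hidem, rank_eq_of_isIdempotentElem_of_trace_eq hidem ?_⟩
  rw [trace_fromBlocks, trace_eq_rank_of_isIdempotentElem hAA,
    trace_eq_rank_of_isIdempotentElem hDD, hAr, hDr, Nat.cast_add]

theorem isProjMatOfRank_half_smul_one_add_offDiagInvolution {k 𝕜 : Type*} [Fintype k]
    [DecidableEq k] [RCLike 𝕜] {U : Matrix k k 𝕜} (hU : U ∈ unitaryGroup k 𝕜) :
    IsProjMatOfRank (Fintype.card k) ((1 / 2 : 𝕜) • (1 + offDiagInvolution U)) := by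
  have hidem := isIdempotentElem_half_smul_one_add (𝕜 := 𝕜) (offDiagInvolution_mul_self hU)
  have hhalf : IsSelfAdjoint (1 / 2 : 𝕜) := by simp [isSelfAdjoint_iff]
  exact ⟨(hhalf.smul ((IsSelfAdjoint.one _).add (isSelfAdjoint_offDiagInvolution U))).isHermitian,
    hidem, rank_eq_of_isIdempotentElem_of_trace_eq hidem
      (trace_half_smul_one_add_offDiagInvolution U)⟩

theorem stmt5_general {𝕜 : Type*} [RCLike 𝕜] (r n m : ℕ) (hrn : r ≤ n)
    (P₁ Q₁ R₁ : Matrix (Fin m) (Fin m) 𝕜)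
    (hR₁ : IsProjMatOfRank (n - r) R₁)
    (U : Matrix (Fin r) (Fin r) 𝕜) (hU : U ∈ Matrix.unitaryGroup (Fin r) 𝕜)
    (P Q R : Matrix ((Fin r ⊕ Fin r) ⊕ Fin m) ((Fin r ⊕ Fin r) ⊕ Fin m) 𝕜)
    (hP : P = Matrix.fromBlocks (Matrix.fromBlocks 1 0 0 0) 0 0 P₁)
    (hQ : Q = Matrix.fromBlocks (Matrix.fromBlocks 0 0 0 1) 0 0 Q₁)
    (hR : R = Matrix.fromBlocks
      (Matrix.fromBlocks ((1/2 : 𝕜) • 1) ((1/2 : 𝕜) • U) ((1/2 : 𝕜) • U.conjTranspose) ((1/2 : 𝕜) • 1))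
      0 0 R₁) :
    IsProjMatOfRank n R ∧
      (matOpNorm (R₁ - P₁) ≤ (Real.sqrt 2)⁻¹ → matOpNorm (R₁ - Q₁) ≤ (Real.sqrt 2)⁻¹ →
        matOpNorm (R - P) ≤ (Real.sqrt 2)⁻¹ ∧ matOpNorm (R - Q) ≤ (Real.sqrt 2)⁻¹) := by
  rw [fromBlocks_half_eq_half_smul_one_add_offDiagInvolution] at hR
  rw [fromBlocks_one_zero_zero_zero_eq] at hP
  rw [fromBlocks_zero_zero_zero_one_eq] at hQ
  have hJ := offDiagInvolution_mul_self hU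
  have hS := signInvolution_mul_self (Fin r) 𝕜
  have hJS := offDiagInvolution_mul_signInvolution_add U
  have hJsa := isSelfAdjoint_offDiagInvolution U
  have hSsa := isSelfAdjoint_signInvolution (Fin r) 𝕜
  refine ⟨?_, fun hRP hRQ => ⟨?_, ?_⟩⟩
  · have := (isProjMatOfRank_half_smul_one_add_offDiagInvolution hU).fromBlocks hR₁
    rwa [Fintype.card_fin, Nat.add_sub_cancel' hrn, ← hR] at this
  · simp only [matOpNorm_eq_l2_opNorm, hR, hP] at hRP ⊢
    exact l2_opNorm_fromBlocks_sub_le (norm_half_smul_one_add_sub_le hJ hS hJS hJsa hSsa) hRP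
  · simp only [matOpNorm_eq_l2_opNorm, hR, hQ] at hRQ ⊢
    refine l2_opNorm_fromBlocks_sub_le (norm_half_smul_one_add_sub_le hJ ?_ ?_ hJsa hSsa.neg) hRQ
    · rw [neg_mul_neg, hS]
    · rw [mul_neg, neg_mul, ← neg_add, hJS, neg_zero]

/-- Relative to the orthogonal decomposition `H = H₁ ⊕ H₂ ⊕ H₃` (with `dim H₁ = dim H₂ = r`,
`dim H₃ = m`), let `P = diag(I_r, 0, P₁)`, `Q = diag(0, I_r, Q₁)` and
`R = [[½I, ½U, 0], [½U*, ½I, 0], [0, 0, R₁]]` where `U` is an `r × r` unitary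
(orthogonal in the real case) matrix.  Then `R` is an orthogonal projection of rank `n`, and if
`‖R₁ − P₁‖ ≤ 1/√2` and `‖R₁ − Q₁‖ ≤ 1/√2` then `‖R − P‖ ≤ 1/√2` and `‖R − Q‖ ≤ 1/√2`. -/
theorem stmt5 {𝕜 : Type*} [RCLike 𝕜] (r n m : ℕ) (hr : 0 < r) (hrn : r ≤ n)
    (P₁ Q₁ R₁ : Matrix (Fin m) (Fin m) 𝕜)
    (hP₁ : IsProjMatOfRank (n - r) P₁) (hQ₁ : IsProjMatOfRank (n - r) Q₁)
    (hR₁ : IsProjMatOfRank (n - r) R₁)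
    (U : Matrix (Fin r) (Fin r) 𝕜) (hU : U ∈ Matrix.unitaryGroup (Fin r) 𝕜)
    (P Q R : Matrix ((Fin r ⊕ Fin r) ⊕ Fin m) ((Fin r ⊕ Fin r) ⊕ Fin m) 𝕜)
    (hP : P = Matrix.fromBlocks (Matrix.fromBlocks 1 0 0 0) 0 0 P₁)
    (hQ : Q = Matrix.fromBlocks (Matrix.fromBlocks 0 0 0 1) 0 0 Q₁)
    (hR : R = Matrix.fromBlocks
      (Matrix.fromBlocks ((1/2 : 𝕜) • 1) ((1/2 : 𝕜) • U) ((1/2 : 𝕜) • U.conjTranspose) ((1/2 : 𝕜) • 1))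
      0 0 R₁) :
    IsProjMatOfRank n R ∧
      (matOpNorm (R₁ - P₁) ≤ (Real.sqrt 2)⁻¹ → matOpNorm (R₁ - Q₁) ≤ (Real.sqrt 2)⁻¹ →
        matOpNorm (R - P) ≤ (Real.sqrt 2)⁻¹ ∧ matOpNorm (R - Q) ≤ (Real.sqrt 2)⁻¹) :=
  stmt5_general r n m hrn P₁ Q₁ R₁ hR₁ U hU P Q R hP hQ hR
end

section
/- Two rank-n orthogonal projections P and Q on a Hilbert space are adjacent (i.e., dim(im P + im Q) = n + 1, equivalently dim(im P ∩ im Q) = n − 1) if and only if rank(P − Q) = 2. -/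
open Module

theorem Submodule.finrank_map_add_finrank_inf_ker {K V V₂ : Type*} [DivisionRing K]
    [AddCommGroup V] [Module K V] [AddCommGroup V₂] [Module K V₂] (W : Submodule K V)
    [FiniteDimensional K W] (f : V →ₗ[K] V₂) :
    finrank K (W.map f) + finrank K ↥(W ⊓ LinearMap.ker f) = finrank K W := by
  have := (f.domRestrict W).finrank_range_add_finrank_ker
  rwa [LinearMap.range_domRestrict, LinearMap.ker_domRestrict, ← Submodule.finrank_map_subtype_eq,
    Submodule.map_comap_subtype] at this

namespace LinearMap.IsSymmetricProjection

variable {𝕜 E : Type*} [RCLike 𝕜] [NormedAddCommGroup E] [InnerProductSpace 𝕜 E]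
  {p q : E →ₗ[𝕜] E}

theorem apply_eq_self_of_mem_range (hp : p.IsSymmetricProjection) {x : E} (hx : x ∈ range p) :
    p x = x := by
  obtain ⟨y, rfl⟩ := hx
  exact congr($(hp.isIdempotentElem) y)

theorem ker_inf_ker (hp : p.IsSymmetricProjection) (hq : q.IsSymmetricProjection) :
    ker p ⊓ ker q = (range p ⊔ range q)ᗮ := by
  rw [← hp.isSymmetric.orthogonal_range, ← hq.isSymmetric.orthogonal_range,
    Submodule.inf_orthogonal]

theorem inf_ker_sub (hp : p.IsSymmetricProjection) (hq : q.IsSymmetricProjection) :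
    (range p ⊔ range q) ⊓ ker (p - q) = range p ⊓ range q := by
  refine le_antisymm ?_ fun x ⟨hxp, hxq⟩ ↦ ⟨Submodule.mem_sup_left hxp, ?_⟩
  · rintro x ⟨hxW, hx⟩
    have hpq : p x = q x := sub_eq_zero.mp hx
    have hpx : p x ∈ range p ⊓ range q := ⟨⟨x, rfl⟩, hpq ▸ ⟨x, rfl⟩⟩
    have hker : x - p x ∈ ker p ⊓ ker q := by
      rw [Submodule.mem_inf, mem_ker, mem_ker, map_sub, map_sub,
        hp.apply_eq_self_of_mem_range hpx.1, hq.apply_eq_self_of_mem_range hpx.2, hpq]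
      exact ⟨sub_self _, sub_self _⟩
    rw [hp.ker_inf_ker hq] at hker
    have hW : x - p x ∈ range p ⊔ range q := sub_mem hxW (Submodule.mem_sup_left hpx.1)
    have hx_eq : x = p x := sub_eq_zero.mp <| by
      simpa [Submodule.inf_orthogonal_eq_bot] using Submodule.mem_inf.mpr ⟨hW, hker⟩
    exact hx_eq ▸ hpx
  · simp [mem_ker, hp.apply_eq_self_of_mem_range hxp, hq.apply_eq_self_of_mem_range hxq]

theorem range_sub_eq_map_sup (hp : p.IsSymmetricProjection) (hq : q.IsSymmetricProjection)
    [(range p ⊔ range q).HasOrthogonalProjection] :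
    range (p - q) = (range p ⊔ range q).map (p - q) := by
  have hperp : (range p ⊔ range q)ᗮ ≤ ker (p - q) := by
    rw [← hp.ker_inf_ker hq]
    rintro x ⟨hxp, hxq⟩
    simp_all [mem_ker]
  rw [range_eq_map, ← (range p ⊔ range q).sup_orthogonal_of_hasOrthogonalProjection,
    Submodule.map_sup, le_ker_iff_map.mp hperp, sup_bot_eq]

theorem finrank_range_sub_add_finrank_inf (hp : p.IsSymmetricProjection)
    (hq : q.IsSymmetricProjection) [FiniteDimensional 𝕜 (range p)]
    [FiniteDimensional 𝕜 (range q)] :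
    finrank 𝕜 (range (p - q)) + finrank 𝕜 ↥(range p ⊓ range q) =
      finrank 𝕜 ↥(range p ⊔ range q) := by
  rw [hp.range_sub_eq_map_sup hq, ← hp.inf_ker_sub hq]
  exact Submodule.finrank_map_add_finrank_inf_ker _ _

end LinearMap.IsSymmetricProjection

theorem IsOrthProjOfRank.isSymmetricProjection {𝕜 H : Type*} [RCLike 𝕜] [NormedAddCommGroup H]
    [InnerProductSpace 𝕜 H] [CompleteSpace H] {n : ℕ} {P : H →L[𝕜] H}
    (hP : IsOrthProjOfRank n P) : (P : H →ₗ[𝕜] H).IsSymmetricProjection :=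
  ⟨congr(ContinuousLinearMap.toLinearMap $(hP.2.1)), hP.1.isSymmetric⟩

theorem stmt12_general {𝕜 H : Type*} [RCLike 𝕜] [NormedAddCommGroup H] [InnerProductSpace 𝕜 H]
    [CompleteSpace H] (n : ℕ) (hn : 0 < n) (P Q : H →L[𝕜] H)
    (hP : IsOrthProjOfRank n P) (hQ : IsOrthProjOfRank n Q) :
    (Module.finrank 𝕜 ↥(LinearMap.range (P : H →ₗ[𝕜] H) ⊔ LinearMap.range (Q : H →ₗ[𝕜] H)) = n + 1 ↔
        Module.finrank 𝕜 ↥(LinearMap.range ((P - Q : H →L[𝕜] H) : H →ₗ[𝕜] H)) = 2) ∧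
      (Module.finrank 𝕜 ↥(LinearMap.range (P : H →ₗ[𝕜] H) ⊓ LinearMap.range (Q : H →ₗ[𝕜] H)) = n - 1 ↔
        Module.finrank 𝕜 ↥(LinearMap.range ((P - Q : H →L[𝕜] H) : H →ₗ[𝕜] H)) = 2) := by
  have hPr := hP.2.2
  have hQr := hQ.2.2
  have := Module.finite_of_finrank_pos (hPr ▸ hn)
  have := Module.finite_of_finrank_pos (hQr ▸ hn)
  have hrank := hP.isSymmetricProjection.finrank_range_sub_add_finrank_inf hQ.isSymmetricProjection
  have hdim := Submodule.finrank_sup_add_finrank_inf_eq (LinearMap.range (P : H →ₗ[𝕜] H))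
    (LinearMap.range (Q : H →ₗ[𝕜] H))
  rw [ContinuousLinearMap.toLinearMap_sub]
  omega

/-- Two rank-`n` orthogonal projections are adjacent, i.e. `dim(im P + im Q) = n + 1`
(equivalently `dim(im P ∩ im Q) = n − 1`), if and only if `rank (P − Q) = 2`. -/
theorem stmt12 {𝕜 H : Type*} [RCLike 𝕜] [NormedAddCommGroup H] [InnerProductSpace 𝕜 H]
    [CompleteSpace H] (n : ℕ) (hn : 0 < n) (P Q : H →L[𝕜] H) (hne : P ≠ Q)
    (hP : IsOrthProjOfRank n P) (hQ : IsOrthProjOfRank n Q) :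
    (Module.finrank 𝕜 ↥(LinearMap.range (P : H →ₗ[𝕜] H) ⊔ LinearMap.range (Q : H →ₗ[𝕜] H)) = n + 1 ↔
        Module.finrank 𝕜 ↥(LinearMap.range ((P - Q : H →L[𝕜] H) : H →ₗ[𝕜] H)) = 2) ∧
      (Module.finrank 𝕜 ↥(LinearMap.range (P : H →ₗ[𝕜] H) ⊓ LinearMap.range (Q : H →ₗ[𝕜] H)) = n - 1 ↔
        Module.finrank 𝕜 ↥(LinearMap.range ((P - Q : H →L[𝕜] H) : H →ₗ[𝕜] H)) = 2) :=
  stmt12_general n hn P Q hP hQ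
end

section
/- Let n ≥ 2 and dim H ≥ 2n + 1. For distinct P, Q ∈ P_n(H), P and Q are adjacent (dim(im P ∩ im Q) = n − 1) if and only if for every R ∈ P_n(H) \ {P,Q}^⊤, the set ({R} ∪ {P,Q}^⊤)^⊤ contains at most one projection. -/
/-- For `A ⊆ P_n(H)`, the set `A^⊤ = {Q ∈ P_n(H) : Q P = 0 for all P ∈ A}`. -/
def orthTop {𝕜 H : Type*} [RCLike 𝕜] [NormedAddCommGroup H]
    [InnerProductSpace 𝕜 H] [CompleteSpace H] (n : ℕ) (A : Set (H →L[𝕜] H)) :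
    Set (H →L[𝕜] H) :=
  {Q | IsOrthProjOfRank n Q ∧ ∀ P ∈ A, Q ∘L P = 0}

/-!
A rank-`n` projection is determined by its range, and `T ∘L P = 0` says that the ranges are
orthogonal, so everything is a statement about `n`-dimensional subspaces. Let
`M = im P ⊔ im Q` and `k = dim (im P ⊓ im Q)`, so `dim M = 2n - k`; then `{P,Q}^⊤` consists of
the projections onto the `n`-dimensional subspaces of `Mᗮ`.

If `k = n - 1`, then `dim Mᗮ ≥ n`, so every vector of `Mᗮ` lies in an `n`-dimensional subspace of
`Mᗮ`; hence a projection orthogonal to `{P,Q}^⊤` has its range inside `M`. If it is also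
orthogonal to `R ∉ {P,Q}^⊤`, its range lies in `M ⊓ (im R)ᗮ`, a proper subspace of the
`(n + 1)`-dimensional `M`, and therefore equals it.

If `k ≤ n - 2`, let `R` project onto `V ⊕ W` with `V ≤ M` of dimension `n - k - 1` and `W ≤ Mᗮ` of
dimension `k + 1` (possible because `dim H ≥ 2n + 1`). Then `M ⊓ Vᗮ` has dimension `n + 1`, and the
projections onto any two of its `n`-dimensional subspaces lie in `({R} ∪ {P,Q}^⊤)^⊤`.
-/

open Module Submodule

section FiniteRankSubspaces

variable {K V : Type*} [DivisionRing K] [AddCommGroup V] [Module K V]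

theorem Submodule.exists_le_finrank_eq (W : Submodule K V) {r : ℕ}
    (h : (r : Cardinal) ≤ Module.rank K W) :
    ∃ U ≤ W, FiniteDimensional K U ∧ finrank K U = r := by
  obtain ⟨s, hcard, hli⟩ := le_rank_iff_exists_linearIndependent_finset.mp h
  have hli' : LinearIndependent K (fun x : (s : Set W) => ((x : W) : V)) :=
    hli.map' W.subtype W.ker_subtype
  refine ⟨span K (Set.range fun x : (s : Set W) => ((x : W) : V)), ?_,
    FiniteDimensional.span_of_finite K (Set.finite_range _), ?_⟩
  · rw [span_le]
    rintro _ ⟨x, rfl⟩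
    exact (x : W).2
  · rw [finrank_span_eq_card hli']
    simpa using hcard

theorem Submodule.exists_le_finrank_eq_of_mem (W : Submodule K V) {r : ℕ} (hr : r ≠ 0)
    (h : (r : Cardinal) ≤ Module.rank K W) {v : V} (hv : v ∈ W) :
    ∃ U ≤ W, v ∈ U ∧ FiniteDimensional K U ∧ finrank K U = r := by
  obtain ⟨U₀, hU₀W, hU₀, hU₀r⟩ := W.exists_le_finrank_eq h
  by_cases hvU₀ : v ∈ U₀
  · exact ⟨U₀, hU₀W, hvU₀, hU₀, hU₀r⟩
  -- otherwise replace one dimension of `U₀` by the line through `v`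
  have hv0 : v ≠ 0 := fun h0 => hvU₀ (h0 ▸ U₀.zero_mem)
  obtain ⟨U₁, hU₁U₀, hU₁, hU₁r⟩ := U₀.exists_le_finrank_eq (r := r - 1)
    (by rw [← finrank_eq_rank, hU₀r]; exact_mod_cast r.sub_le 1)
  have hdisj : Disjoint (K ∙ v) U₁ :=
    ((disjoint_span_singleton' hv0).mpr fun h => hvU₀ (hU₁U₀ h)).symm
  refine ⟨(K ∙ v) ⊔ U₁, sup_le ((span_singleton_le_iff_mem v W).mpr hv) (hU₁U₀.trans hU₀W),
    mem_sup_left (mem_span_singleton_self v), inferInstance, ?_⟩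
  have := finrank_sup_add_finrank_inf_eq (K ∙ v) U₁
  rw [finrank_span_singleton hv0, hU₁r, hdisj.eq_bot, finrank_bot] at this
  omega

theorem Submodule.exists_ne_le_finrank_eq (N : Submodule K V) [FiniteDimensional K N] {r : ℕ}
    (hr : r ≠ 0) (hrN : r < finrank K N) :
    ∃ U₁ ≤ N, ∃ U₂ ≤ N, U₁ ≠ U₂ ∧ FiniteDimensional K U₁ ∧ finrank K U₁ = r ∧
      FiniteDimensional K U₂ ∧ finrank K U₂ = r := by
  have hrank : (r : Cardinal) ≤ Module.rank K N := by
    rw [← finrank_eq_rank]; exact_mod_cast hrN.le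
  obtain ⟨U₁, hU₁N, hU₁, hU₁r⟩ := N.exists_le_finrank_eq hrank
  obtain ⟨v, hvN, hvU₁⟩ := SetLike.exists_of_lt <|
    lt_of_le_of_ne hU₁N fun h => by rw [h] at hU₁r; omega
  obtain ⟨U₂, hU₂N, hvU₂, hU₂, hU₂r⟩ := N.exists_le_finrank_eq_of_mem hr hrank hvN
  exact ⟨U₁, hU₁N, U₂, hU₂N, fun h => hvU₁ (h ▸ hvU₂), hU₁, hU₁r, hU₂, hU₂r⟩

end FiniteRankSubspaces

section InnerProduct

variable {𝕜 H : Type*} [RCLike 𝕜] [NormedAddCommGroup H] [InnerProductSpace 𝕜 H]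

theorem Submodule.natCast_le_rank_orthogonal (M : Submodule 𝕜 H) [FiniteDimensional 𝕜 M] {c : ℕ}
    (h : ((finrank 𝕜 M + c : ℕ) : Cardinal) ≤ Module.rank 𝕜 H) :
    (c : Cardinal) ≤ Module.rank 𝕜 Mᗮ := by
  have hsplit : Module.rank 𝕜 M + Module.rank 𝕜 Mᗮ = Module.rank 𝕜 H := by
    rw [← rank_prod', (prodEquivOfIsCompl M Mᗮ M.isCompl_orthogonal).rank_eq]
  rw [← hsplit, ← finrank_eq_rank, Nat.cast_add, add_comm, add_comm (finrank 𝕜 M : Cardinal)] at h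
  exact (Cardinal.add_nat_le_add_nat_iff _).mp h

theorem Submodule.le_of_forall_isOrtho_finrank_eq {X M : Submodule 𝕜 H} [M.HasOrthogonalProjection]
    {n : ℕ} (hn : n ≠ 0) (hM : (n : Cardinal) ≤ Module.rank 𝕜 Mᗮ)
    (hX : ∀ U ≤ Mᗮ, FiniteDimensional 𝕜 U → finrank 𝕜 U = n → X ⟂ U) : X ≤ M := by
  have hMX : Mᗮ ≤ Xᗮ := fun v hv => by
    obtain ⟨U, hUM, hvU, hU, hUn⟩ := Mᗮ.exists_le_finrank_eq_of_mem hn hM hv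
    exact isOrtho_iff_le.mp (hX U hUM hU hUn).symm hvU
  simpa only [orthogonal_orthogonal] using (X.le_orthogonal_orthogonal).trans (orthogonal_le hMX)

theorem Submodule.exists_finrank_eq_not_isOrtho_lt_finrank_inf_orthogonal (M : Submodule 𝕜 H)
    [FiniteDimensional 𝕜 M] {n t : ℕ} (htn : t < n) (hM : 2 * n < finrank 𝕜 M + t)
    (ht : (t : Cardinal) ≤ Module.rank 𝕜 Mᗮ) :
    ∃ A : Submodule 𝕜 H, FiniteDimensional 𝕜 A ∧ finrank 𝕜 A = n ∧ ¬ A ⟂ M ∧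
      n < finrank 𝕜 ↥(M ⊓ Aᗮ) := by
  obtain ⟨V, hVM, hV, hVr⟩ := M.exists_le_finrank_eq (r := n - t)
    (by rw [← finrank_eq_rank]; exact_mod_cast (by omega : n - t ≤ finrank 𝕜 M))
  obtain ⟨W, hWM, hW, hWr⟩ := Mᗮ.exists_le_finrank_eq ht
  have hVW : V ⊓ W = ⊥ := eq_bot_iff.mpr <| (inf_le_inf hVM hWM).trans (M.inf_orthogonal_eq_bot).le
  have hMA : M ⊓ (V ⊔ W)ᗮ = Vᗮ ⊓ M := by
    rw [← inf_orthogonal, inf_comm, inf_assoc, inf_eq_right.mpr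
      ((M.le_orthogonal_orthogonal).trans (orthogonal_le hWM))]
  refine ⟨V ⊔ W, inferInstance, ?_, fun h => ?_, ?_⟩
  · have := finrank_sup_add_finrank_inf_eq V W
    rw [hVW, finrank_bot] at this
    omega
  · rw [isOrtho_self.mp (h.mono le_sup_left hVM), finrank_bot] at hVr
    omega
  · have := finrank_add_inf_finrank_orthogonal hVM
    rw [hMA]
    omega

end InnerProduct

section Projections

variable {𝕜 H : Type*} [RCLike 𝕜] [NormedAddCommGroup H] [InnerProductSpace 𝕜 H]
  [CompleteSpace H] {n : ℕ} {P Q R T : H →L[𝕜] H}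

local notation "im " T:max => LinearMap.range (T : H →ₗ[𝕜] H)

theorem IsOrthProjOfRank.isStarProjection (hP : IsOrthProjOfRank n P) : IsStarProjection P :=
  ⟨hP.2.1, hP.1⟩

theorem IsOrthProjOfRank.finrank_range (hP : IsOrthProjOfRank n P) : finrank 𝕜 (im P) = n :=
  hP.2.2

theorem IsOrthProjOfRank.finiteDimensional_range (hP : IsOrthProjOfRank n P) (hn : n ≠ 0) :
    FiniteDimensional 𝕜 (im P) :=
  Module.finite_of_finrank_pos (by rw [hP.finrank_range]; omega)

theorem isOrthProjOfRank_starProjection (U : Submodule 𝕜 H) [U.HasOrthogonalProjection] :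
    IsOrthProjOfRank (finrank 𝕜 U) U.starProjection :=
  ⟨isSelfAdjoint_starProjection U, U.isIdempotentElem_starProjection,
    by rw [U.range_starProjection]⟩

theorem IsStarProjection.comp_eq_zero_iff (hT : IsStarProjection T) (hP : IsStarProjection P) :
    T ∘L P = 0 ↔ im T ⟂ im P := by
  obtain ⟨_, hT⟩ := isStarProjection_iff_eq_starProjection_range.mp hT
  obtain ⟨_, hP⟩ := isStarProjection_iff_eq_starProjection_range.mp hP
  rw [hT, hP, starProjection_comp_starProjection_eq_zero_iff, range_starProjection,
    range_starProjection]

theorem mem_orthTop_iff {A : Set (H →L[𝕜] H)} (hA : ∀ X ∈ A, IsStarProjection X) :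
    T ∈ orthTop n A ↔ IsOrthProjOfRank n T ∧ ∀ X ∈ A, im T ⟂ im X :=
  and_congr_right fun hT =>
    forall₂_congr fun X hX => hT.isStarProjection.comp_eq_zero_iff (hA X hX)

theorem mem_orthTop_pair_iff (hP : IsStarProjection P) (hQ : IsStarProjection Q) :
    T ∈ orthTop n {P, Q} ↔ IsOrthProjOfRank n T ∧ im T ⟂ im P ⊔ im Q := by
  rw [mem_orthTop_iff (by simp [hP, hQ]), isOrtho_sup_right]
  simp

theorem starProjection_mem_orthTop_iff {U : Submodule 𝕜 H} [FiniteDimensional 𝕜 U]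
    (hU : finrank 𝕜 U = n) {A : Set (H →L[𝕜] H)} (hA : ∀ X ∈ A, IsStarProjection X) :
    U.starProjection ∈ orthTop n A ↔ ∀ X ∈ A, U ⟂ im X := by
  rw [mem_orthTop_iff hA, range_starProjection, ← hU]
  exact and_iff_right (isOrthProjOfRank_starProjection U)

theorem isStarProjection_of_mem_union_orthTop (hR : IsOrthProjOfRank n R)
    (hT : T ∈ {R} ∪ orthTop n {P, Q}) : IsStarProjection T := by
  rcases hT with rfl | hT
  exacts [hR.isStarProjection, hT.1.isStarProjection]

theorem finrank_inf_range_lt (hP : IsOrthProjOfRank n P) (hQ : IsOrthProjOfRank n Q)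
    (hn : n ≠ 0) (hne : P ≠ Q) : finrank 𝕜 ↥(im P ⊓ im Q) < n := by
  have := hP.finiteDimensional_range hn
  have := hQ.finiteDimensional_range hn
  refine lt_of_le_of_ne (hP.finrank_range ▸ finrank_mono inf_le_left) fun h => hne ?_
  refine ContinuousLinearMap.IsStarProjection.ext hP.isStarProjection hQ.isStarProjection ?_
  rw [← eq_of_le_of_finrank_le (inf_le_left : im P ⊓ im Q ≤ im P) (by rw [h, hP.finrank_range]),
    eq_of_le_of_finrank_le (inf_le_right : im P ⊓ im Q ≤ im Q) (by rw [h, hQ.finrank_range])]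

theorem finrank_sup_range_add_finrank_inf_range (hP : IsOrthProjOfRank n P)
    (hQ : IsOrthProjOfRank n Q) (hn : n ≠ 0) :
    finrank 𝕜 ↥(im P ⊔ im Q) + finrank 𝕜 ↥(im P ⊓ im Q) = 2 * n := by
  have := hP.finiteDimensional_range hn
  have := hQ.finiteDimensional_range hn
  rw [finrank_sup_add_finrank_inf_eq, hP.finrank_range, hQ.finrank_range, two_mul]

theorem range_eq_of_mem_orthTop (hP : IsOrthProjOfRank n P) (hQ : IsOrthProjOfRank n Q)
    (hR : IsOrthProjOfRank n R) (hn : n ≠ 0)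
    (hdim : ((2 * n + 1 : ℕ) : Cardinal) ≤ Module.rank 𝕜 H)
    (hk : finrank 𝕜 ↥(im P ⊓ im Q) = n - 1) (hRPQ : R ∉ orthTop n {P, Q})
    (hT : T ∈ orthTop n ({R} ∪ orthTop n {P, Q})) :
    im T = (im P ⊔ im Q) ⊓ (im R)ᗮ := by
  have hM : finrank 𝕜 ↥(im P ⊔ im Q) = n + 1 := by
    have := finrank_sup_range_add_finrank_inf_range hP hQ hn
    omega
  have : FiniteDimensional 𝕜 ↥(im P ⊔ im Q) := Module.finite_of_finrank_pos (by omega)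
  have hMperp : (n : Cardinal) ≤ Module.rank 𝕜 (im P ⊔ im Q)ᗮ :=
    natCast_le_rank_orthogonal _ (by convert hdim using 2; omega)
  rw [mem_orthTop_iff fun X => isStarProjection_of_mem_union_orthTop hR] at hT
  obtain ⟨hTn, hTorth⟩ := hT
  have hTM : im T ≤ im P ⊔ im Q := by
    refine le_of_forall_isOrtho_finrank_eq hn hMperp fun U hUM _ hUn => ?_
    have hU : U.starProjection ∈ orthTop n {P, Q} :=
      (mem_orthTop_pair_iff hP.isStarProjection hQ.isStarProjection).mpr
        ⟨hUn ▸ isOrthProjOfRank_starProjection U, by rwa [range_starProjection, isOrtho_iff_le]⟩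
    simpa only [range_starProjection] using hTorth _ (Or.inr hU)
  have hTR : im T ≤ (im R)ᗮ := (hTorth R (Or.inl rfl)).le
  have hlt : (im P ⊔ im Q) ⊓ (im R)ᗮ < im P ⊔ im Q := by
    refine inf_le_left.lt_of_ne fun h => hRPQ ?_
    refine (mem_orthTop_pair_iff hP.isStarProjection hQ.isStarProjection).mpr ⟨hR, ?_⟩
    exact (isOrtho_iff_le.mpr (h ▸ inf_le_right)).symm
  refine eq_of_le_of_finrank_le (le_inf hTM hTR) ?_
  have := finrank_lt_finrank_of_lt hlt
  rw [hTn.finrank_range]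
  omega

theorem exists_nontrivial_orthTop (hP : IsOrthProjOfRank n P) (hQ : IsOrthProjOfRank n Q)
    (hn : n ≠ 0) (hdim : ((2 * n + 1 : ℕ) : Cardinal) ≤ Module.rank 𝕜 H)
    (hk : finrank 𝕜 ↥(im P ⊓ im Q) + 2 ≤ n) :
    ∃ R, IsOrthProjOfRank n R ∧ R ∉ orthTop n {P, Q} ∧
      (orthTop n ({R} ∪ orthTop n {P, Q})).Nontrivial := by
  have := hP.finiteDimensional_range hn
  have := hQ.finiteDimensional_range hn
  have hsum := finrank_sup_range_add_finrank_inf_range hP hQ hn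
  obtain ⟨A, _, hAn, hAM, hN⟩ :=
    (im P ⊔ im Q).exists_finrank_eq_not_isOrtho_lt_finrank_inf_orthogonal
      (n := n) (t := finrank 𝕜 ↥(im P ⊓ im Q) + 1) (by omega) (by omega)
      ((im P ⊔ im Q).natCast_le_rank_orthogonal (by convert hdim using 2; omega))
  have hR : IsOrthProjOfRank n A.starProjection := hAn ▸ isOrthProjOfRank_starProjection A
  have hmem (U : Submodule 𝕜 H) (hUle : U ≤ (im P ⊔ im Q) ⊓ Aᗮ) [FiniteDimensional 𝕜 U]
      (hUn : finrank 𝕜 U = n) :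
      U.starProjection ∈ orthTop n ({A.starProjection} ∪ orthTop n {P, Q}) := by
    refine (starProjection_mem_orthTop_iff hUn
      fun X => isStarProjection_of_mem_union_orthTop hR).mpr ?_
    rintro X (rfl | hX)
    · rw [range_starProjection, isOrtho_iff_le]
      exact hUle.trans inf_le_right
    · exact ((mem_orthTop_pair_iff hP.isStarProjection hQ.isStarProjection).mp hX).2.symm.mono_left
        (hUle.trans inf_le_left)
  obtain ⟨U₁, hU₁, U₂, hU₂, hne, _, hU₁n, _, hU₂n⟩ :=
    ((im P ⊔ im Q) ⊓ Aᗮ).exists_ne_le_finrank_eq hn hN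
  refine ⟨A.starProjection, hR, fun h => hAM ?_, U₁.starProjection, hmem U₁ hU₁ hU₁n,
    U₂.starProjection, hmem U₂ hU₂ hU₂n, fun h => hne ?_⟩
  · simpa only [range_starProjection] using
      ((mem_orthTop_pair_iff hP.isStarProjection hQ.isStarProjection).mp h).2
  · rw [← U₁.range_starProjection, h, range_starProjection]

end Projections

/-- For `n ≥ 2`, `dim H ≥ 2n + 1` and distinct `P, Q ∈ P_n(H)`: `P` and `Q` are adjacent
(`dim(im P ∩ im Q) = n − 1`) iff for every `R ∈ P_n(H) \ {P,Q}^⊤` the set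
`({R} ∪ {P,Q}^⊤)^⊤` contains at most one projection. -/
theorem stmt13 {𝕜 H : Type*} [RCLike 𝕜] [NormedAddCommGroup H] [InnerProductSpace 𝕜 H]
    [CompleteSpace H] (n : ℕ) (hn : 2 ≤ n)
    (hdim : ((2 * n + 1 : ℕ) : Cardinal) ≤ Module.rank 𝕜 H)
    (P Q : H →L[𝕜] H) (hne : P ≠ Q)
    (hP : IsOrthProjOfRank n P) (hQ : IsOrthProjOfRank n Q) :
    Module.finrank 𝕜 ↥(LinearMap.range (P : H →ₗ[𝕜] H) ⊓ LinearMap.range (Q : H →ₗ[𝕜] H)) = n - 1 ↔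
      ∀ R : H →L[𝕜] H, IsOrthProjOfRank n R → R ∉ orthTop n {P, Q} →
        Set.Subsingleton (orthTop n ({R} ∪ orthTop n {P, Q})) := by
  have hn0 : n ≠ 0 := by omega
  constructor
  · intro hk R hR hRPQ T₁ hT₁ T₂ hT₂
    exact ContinuousLinearMap.IsStarProjection.ext hT₁.1.isStarProjection hT₂.1.isStarProjection <|
      (range_eq_of_mem_orthTop hP hQ hR hn0 hdim hk hRPQ hT₁).trans
        (range_eq_of_mem_orthTop hP hQ hR hn0 hdim hk hRPQ hT₂).symm
  · intro h
    by_contra hk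
    have hlt := finrank_inf_range_lt hP hQ hn0 hne
    obtain ⟨R, hR, hRPQ, hnt⟩ := exists_nontrivial_orthTop hP hQ hn0 hdim (by omega)
    exact hnt.not_subsingleton (h R hR hRPQ)
end
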